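/- Let (K,S) ∈ 𝕄, n ≥ 1, A_max = max_{1≤l≤L} A_l, and let either (Case 1) η(ε) = (1+ε)^{L+1} − 1 and ξ = 4·√(A_max)·√L / (2^{L+1} − 1), or (Case 2) η(ε) = (1+ε)·(1 + 2√2 ε + √2 ε²)^L − 1 and ξ = 4·√(A_max)·√L / (2·(1+3√2)^L − 1). If either (ξ < 1 and K ≤ n) or n > ξ²·K, then √n·η(1)² > φ_{(K,S)}(η(1)); consequently every σ ∈ (0, η(1)] satisfying φ_{(K,S)}(σ) = √n·σ² satisfies σ < η(1). -/

import Mathlib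

open Real BigOperators

noncomputable section

/-- The collection 𝕄 of model indices `(K, S)`. -/
def Mset (L : ℕ) : Set (ℕ × Finset (Fin L)) :=
  {p | (p.1 = 1 ∧ p.2 = ∅) ∨ (2 ≤ p.1 ∧ p.2.Nonempty)}

/-- Dimension `D_{(K,S)}` of the model `M_{(K,S)}`. -/
def Dks {L : ℕ} (A : Fin L → ℕ) (K : ℕ) (S : Finset (Fin L)) : ℕ :=
  (K - 1) + K * ∑ l ∈ S, (A l - 1) + ∑ l ∈ Sᶜ, (A l - 1)

/-- The complexity constant `C_{(K,S)}`. -/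
def Cks {L : ℕ} (A : Fin L → ℕ) (K : ℕ) (S : Finset (Fin L)) : ℝ :=
  (Real.log (2 * Real.pi * Real.exp 1) * (Dks A K S : ℝ)
    + Real.log (4 * Real.pi * Real.exp 1)
        * ((if 2 ≤ K then (1 : ℝ) else 0) + (L : ℝ) + ((K : ℝ) - 1) * (S.card : ℝ))
    + (if 2 ≤ K then Real.log ((K : ℝ) + 1) else 0)
    + ∑ l, Real.log ((A l : ℝ) + 1)
    + ((K : ℝ) - 1) * ∑ l ∈ S, Real.log ((A l : ℝ) + 1)) / 2

/-- The function `η` of Case 1. -/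
def etaCase1 (L : ℕ) (x : ℝ) : ℝ := (1 + x) ^ (L + 1) - 1

/-- The function `η` of Case 2. -/
def etaCase2 (L : ℕ) (x : ℝ) : ℝ :=
  (1 + x) * (1 + 2 * Real.sqrt 2 * x + Real.sqrt 2 * x ^ 2) ^ L - 1

/-- `A_max`. -/
def Amax {L : ℕ} (A : Fin L → ℕ) : ℕ := Finset.univ.sup A

/-- The function `φ_{(K,S)}`, written in terms of the inverse `g` of `η`. -/
def phiKS {L : ℕ} (A : Fin L → ℕ) (K : ℕ) (S : Finset (Fin L)) (g : ℝ → ℝ) (σ : ℝ) : ℝ :=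
  (2 * Real.sqrt (Real.log 2) * Real.sqrt (Dks A K S)
    + Real.sqrt (Cks A K S - (Dks A K S : ℝ) * Real.log (g σ))) * σ

/-! The proof only needs the value of `φ_{(K,S)}` at `σ = η(1)`, where `η⁻¹(σ) = 1` kills the
logarithm, so `φ_{(K,S)}(η(1)) = (2√(ln 2)·√D + √C)·η(1)`. Crude bounds give `D ≤ K L A_max` and
`C ≤ 5 K L A_max`, hence `2√(ln 2)·√D + √C ≤ 4√(K L A_max)`. In both cases `ξ·η(1) = 4√(A_max)√L`,
so this is `ξ√K·η(1)`, and either condition on `ξ` gives `ξ√K < √n`. -/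

lemma log_four_pi_exp_one_lt_four : log (4 * π * exp 1) < 4 := by
  have h16 : log (4 * π) < log 16 := log_lt_log (by positivity) (by linarith [pi_lt_four])
  have h2 : log 16 = 4 * log 2 := by
    rw [show (16 : ℝ) = 2 ^ 4 by norm_num, log_pow]; norm_num
  rw [log_mul (by positivity) (exp_pos 1).ne', log_exp]
  linarith [log_two_lt_d9]

lemma etaCase1_one (L : ℕ) : etaCase1 L 1 = 2 ^ (L + 1) - 1 := by
  norm_num [etaCase1]

lemma etaCase2_one (L : ℕ) : etaCase2 L 1 = 2 * (1 + 3 * √2) ^ L - 1 := by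
  rw [etaCase2]; ring

lemma mul_sqrt_lt_sqrt_of_cond {ξ : ℝ} {k m : ℕ} (hk : 1 ≤ k)
    (h : (ξ < 1 ∧ k ≤ m) ∨ (m : ℝ) > ξ ^ 2 * k) : ξ * √k < √m := by
  rcases h with ⟨hξ, hkm⟩ | hm
  · calc ξ * √k < 1 * √k := by gcongr
      _ ≤ √m := by rw [one_mul]; exact sqrt_le_sqrt (by exact_mod_cast hkm)
  · calc ξ * √k ≤ |ξ| * √k := by gcongr; exact le_abs_self ξ
      _ = √(ξ ^ 2 * k) := by rw [sqrt_mul (sq_nonneg ξ), sqrt_sq_eq_abs]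
      _ < √m := sqrt_lt_sqrt (by positivity) hm

section

variable {L : ℕ} (A : Fin L → ℕ)

lemma one_le_of_mem_Mset {K : ℕ} {S : Finset (Fin L)} (hm : (K, S) ∈ Mset L) : 1 ≤ K := by
  rcases hm with ⟨h, _⟩ | ⟨h, _⟩ <;> omega

lemma le_Amax (l : Fin L) : A l ≤ Amax A :=
  Finset.le_sup (Finset.mem_univ l)

lemma one_le_of_one_le_Amax (ha : 1 ≤ Amax A) : 1 ≤ L :=
  Nat.pos_of_ne_zero (by rintro rfl; simp [Amax] at ha)

lemma Dks_le_of_one_le {K : ℕ} (hK : 1 ≤ K) (S : Finset (Fin L)) :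
    Dks A K S ≤ K - 1 + K * ∑ l, (A l - 1) := by
  rw [Dks, ← Finset.sum_add_sum_compl S, mul_add, add_assoc]
  gcongr
  exact Nat.le_mul_of_pos_left _ hK

lemma Dks_le_mul_Amax {K : ℕ} (hK : 1 ≤ K) (S : Finset (Fin L)) (ha : 1 ≤ Amax A) :
    Dks A K S ≤ K * L * Amax A := by
  have hL := one_le_of_one_le_Amax A ha
  have hsum : ∑ l, (A l - 1) ≤ L * (Amax A - 1) := by
    simpa using Finset.sum_le_card_nsmul Finset.univ (fun l => A l - 1) (Amax A - 1)
      (fun l _ => Nat.sub_le_sub_right (le_Amax A l) 1)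
  obtain ⟨b, hb⟩ := Nat.exists_eq_add_of_le' ha
  calc Dks A K S ≤ K - 1 + K * (L * (Amax A - 1)) := (Dks_le_of_one_le A hK S).trans (by gcongr)
    _ ≤ K * L * Amax A := by
      rw [hb, Nat.add_sub_cancel]
      nlinarith [Nat.sub_le K 1]

lemma sum_log_add_one_le (s : Finset (Fin L)) :
    ∑ l ∈ s, log ((A l : ℝ) + 1) ≤ s.card * Amax A := by
  simpa using Finset.sum_le_card_nsmul s (fun l => log ((A l : ℝ) + 1)) (Amax A) fun l _ => by
    have := log_le_sub_one_of_pos (show (0 : ℝ) < A l + 1 by positivity)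
    have : (A l : ℝ) ≤ Amax A := by exact_mod_cast le_Amax A l
    linarith

lemma Cks_le {K : ℕ} (hK : 1 ≤ K) (S : Finset (Fin L)) (ha : 2 ≤ Amax A) :
    Cks A K S ≤ 5 * (K * L * Amax A) := by
  have hL := one_le_of_one_le_Amax A (one_le_two.trans ha)
  have hKr : (1 : ℝ) ≤ K := by exact_mod_cast hK
  have hLr : (1 : ℝ) ≤ L := by exact_mod_cast hL
  have har : (2 : ℝ) ≤ Amax A := by exact_mod_cast ha
  have hS : (S.card : ℝ) ≤ L := by exact_mod_cast (Finset.card_le_univ S).trans_eq (by simp)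
  have hKL : 1 ≤ (K : ℝ) * L := one_le_mul_of_one_le_of_one_le hKr hLr
  have hD : (Dks A K S : ℝ) ≤ K * L * Amax A := by
    exact_mod_cast Dks_le_mul_Amax A hK S (one_le_two.trans ha)
  set p : ℝ := K * L * Amax A
  have hlog2 : log (2 * π * exp 1) ≤ log (4 * π * exp 1) := by gcongr; norm_num
  have hlog4 := log_four_pi_exp_one_lt_four
  have hind : (if 2 ≤ K then (1 : ℝ) else 0) ≤ 1 := by split_ifs <;> norm_num
  have hcount : (if 2 ≤ K then (1 : ℝ) else 0) + L + (K - 1) * S.card ≤ p := by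
    have : ((K : ℝ) - 1) * S.card ≤ (K - 1) * L := by gcongr
    have : (K : ℝ) * L * 2 ≤ p := mul_le_mul_of_nonneg_left har (by positivity)
    linarith
  have hcount0 : 0 ≤ (if 2 ≤ K then (1 : ℝ) else 0) + L + (K - 1) * S.card := by
    have : 0 ≤ ((K : ℝ) - 1) * S.card := mul_nonneg (by linarith) (by positivity)
    split_ifs <;> positivity
  have hlogK : (if 2 ≤ K then log ((K : ℝ) + 1) else 0) ≤ p := by
    have : (K : ℝ) ≤ K * L := le_mul_of_one_le_right (by positivity) hLr
    have : (K : ℝ) * L ≤ p := le_mul_of_one_le_right (by positivity) (by linarith)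
    split_ifs
    · linarith [log_le_sub_one_of_pos (show (0 : ℝ) < K + 1 by positivity)]
    · positivity
  have hlogA : ∑ l, log ((A l : ℝ) + 1) + (K - 1) * ∑ l ∈ S, log ((A l : ℝ) + 1) ≤ p := by
    have huniv := sum_log_add_one_le A Finset.univ
    have hS' : ((K : ℝ) - 1) * ∑ l ∈ S, log ((A l : ℝ) + 1) ≤ (K - 1) * (L * Amax A) :=
      mul_le_mul_of_nonneg_left ((sum_log_add_one_le A S).trans (by gcongr)) (by linarith)
    simp only [Finset.card_univ, Fintype.card_fin] at huniv
    linarith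
  have := mul_le_mul (hlog2.trans hlog4.le) hD (Nat.cast_nonneg _) zero_le_four
  have := mul_le_mul hlog4.le hcount hcount0 zero_le_four
  rw [Cks]
  linarith

lemma two_mul_sqrt_log_two_mul_sqrt_Dks_add_sqrt_Cks_le {K : ℕ} (hK : 1 ≤ K)
    (S : Finset (Fin L)) (ha : 2 ≤ Amax A) :
    2 * √(log 2) * √(Dks A K S) + √(Cks A K S) ≤ 4 * √(K * L * Amax A) := by
  have hD : √(Dks A K S) ≤ √(K * L * Amax A) :=
    sqrt_le_sqrt (by exact_mod_cast Dks_le_mul_Amax A hK S (one_le_two.trans ha))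
  have hC : √(Cks A K S) ≤ √5 * √(K * L * Amax A) := by
    rw [← sqrt_mul (by norm_num : (0 : ℝ) ≤ 5)]
    exact sqrt_le_sqrt (Cks_le A hK S ha)
  have hlog2 : √(log 2) ≤ 0.85 := sqrt_le_iff.mpr ⟨by norm_num, by linarith [log_two_lt_d9]⟩
  have hsqrt5 : √5 ≤ 2.25 := sqrt_le_iff.mpr ⟨by norm_num, by norm_num⟩
  calc 2 * √(log 2) * √(Dks A K S) + √(Cks A K S)
      ≤ 2 * 0.85 * √(K * L * Amax A) + 2.25 * √(K * L * Amax A) := by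
        gcongr
        exact hC.trans (by gcongr)
    _ ≤ 4 * √(K * L * Amax A) := by linarith [sqrt_nonneg (K * L * Amax A : ℝ)]

lemma one_le_eta_one_and_eq_div {η : ℝ → ℝ} {ξ : ℝ}
    (hcase : (η = etaCase1 L ∧ ξ = 4 * √(Amax A) * √L / ((2 : ℝ) ^ (L + 1) - 1)) ∨
      (η = etaCase2 L ∧ ξ = 4 * √(Amax A) * √L / (2 * (1 + 3 * √2) ^ L - 1))) :
    1 ≤ η 1 ∧ ξ = 4 * √(Amax A) * √L / η 1 := by
  rcases hcase with ⟨rfl, rfl⟩ | ⟨rfl, rfl⟩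
  · rw [etaCase1_one]
    have : (2 : ℝ) ≤ 2 ^ (L + 1) := le_self_pow₀ one_le_two (Nat.succ_ne_zero L)
    exact ⟨by linarith, rfl⟩
  · rw [etaCase2_one]
    have : (1 : ℝ) ≤ (1 + 3 * √2) ^ L := one_le_pow₀ (le_add_of_nonneg_right (by positivity))
    exact ⟨by linarith, rfl⟩

end

lemma phiKS_of_apply_eq_one {L K : ℕ} (A : Fin L → ℕ) (S : Finset (Fin L)) {g : ℝ → ℝ} {σ : ℝ}
    (hg : g σ = 1) :
    phiKS A K S g σ = (2 * √(log 2) * √(Dks A K S) + √(Cks A K S)) * σ := by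
  rw [phiKS, hg, log_one, mul_zero, sub_zero]

theorem sigma_less_than_eta_general (L : ℕ) (hL : 1 ≤ L) (A : Fin L → ℕ) (hA : ∀ l, 2 ≤ A l)
    (K : ℕ) (S : Finset (Fin L)) (hm : (K, S) ∈ Mset L)
    (n : ℕ) (η : ℝ → ℝ) (ξ : ℝ)
    (hcase :
      (η = etaCase1 L ∧
        ξ = 4 * Real.sqrt (Amax A) * Real.sqrt L / ((2 : ℝ) ^ (L + 1) - 1)) ∨
      (η = etaCase2 L ∧
        ξ = 4 * Real.sqrt (Amax A) * Real.sqrt L / (2 * (1 + 3 * Real.sqrt 2) ^ L - 1)))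
    -- `g` is the inverse function of `η`
    (g : ℝ → ℝ)
    (hg1 : ∀ x ∈ Set.Icc (0 : ℝ) 1, g (η x) = x)
    (hcond : (ξ < 1 ∧ K ≤ n) ∨ (n : ℝ) > ξ ^ 2 * K) :
    Real.sqrt n * (η 1) ^ 2 > phiKS A K S g (η 1) ∧
    ∀ σ ∈ Set.Ioc (0 : ℝ) (η 1), phiKS A K S g σ = Real.sqrt n * σ ^ 2 → σ < η 1 := by
  have hK : 1 ≤ K := one_le_of_mem_Mset hm
  have ha : 2 ≤ Amax A := (hA ⟨0, hL⟩).trans (le_Amax A _)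
  obtain ⟨hη, hξ⟩ := one_le_eta_one_and_eq_div A hcase
  have hcoeff : 2 * √(log 2) * √(Dks A K S) + √(Cks A K S) < √n * η 1 :=
    calc 2 * √(log 2) * √(Dks A K S) + √(Cks A K S) ≤ 4 * √(K * L * Amax A) :=
          two_mul_sqrt_log_two_mul_sqrt_Dks_add_sqrt_Cks_le A hK S ha
      _ = ξ * √K * η 1 := by
          rw [hξ, sqrt_mul (by positivity), sqrt_mul (by positivity)]
          field_simp
      _ < √n * η 1 := by gcongr; exact mul_sqrt_lt_sqrt_of_cond hK hcond
  have hφ : phiKS A K S g (η 1) < √n * η 1 ^ 2 := by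
    rw [phiKS_of_apply_eq_one A S (hg1 1 ⟨zero_le_one, le_rfl⟩), sq, ← mul_assoc]
    gcongr
  exact ⟨hφ, fun σ hσ hsol => hσ.2.lt_of_ne (by rintro rfl; exact hφ.ne hsol)⟩

/-- **Lemma 7.** Under the condition on `ξ`, any solution `σ ∈ (0, η(1)]` of
`φ_{(K,S)}(σ) = √n σ²` satisfies `σ < η(1)`. -/
theorem sigma_less_than_eta (L : ℕ) (hL : 1 ≤ L) (A : Fin L → ℕ) (hA : ∀ l, 2 ≤ A l)
    (K : ℕ) (S : Finset (Fin L)) (hm : (K, S) ∈ Mset L)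
    (n : ℕ) (hn : 1 ≤ n) (η : ℝ → ℝ) (ξ : ℝ)
    (hcase :
      (η = etaCase1 L ∧
        ξ = 4 * Real.sqrt (Amax A) * Real.sqrt L / ((2 : ℝ) ^ (L + 1) - 1)) ∨
      (η = etaCase2 L ∧
        ξ = 4 * Real.sqrt (Amax A) * Real.sqrt L / (2 * (1 + 3 * Real.sqrt 2) ^ L - 1)))
    -- `g` is the inverse function of `η`
    (g : ℝ → ℝ)
    (hg1 : ∀ x ∈ Set.Icc (0 : ℝ) 1, g (η x) = x)
    (hg2 : ∀ y ∈ Set.Icc 0 (η 1), g y ∈ Set.Icc (0 : ℝ) 1 ∧ η (g y) = y)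
    (hcond : (ξ < 1 ∧ K ≤ n) ∨ (n : ℝ) > ξ ^ 2 * K) :
    Real.sqrt n * (η 1) ^ 2 > phiKS A K S g (η 1) ∧
    ∀ σ ∈ Set.Ioc (0 : ℝ) (η 1), phiKS A K S g σ = Real.sqrt n * σ ^ 2 → σ < η 1 :=
  sigma_less_than_eta_general L hL A hA K S hm n η ξ hcase g hg1 hcond
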